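/- arXiv:1611.02052 — 5 statements merged into one kernel-verified Lean document; each statement's English description precedes it below -/
import Mathlib

section
/- Let n ≥ 2, let r ∈ ℝ^n have all entries positive, let i*, i' ∈ {1,…,n} with i* ≠ i' and r_{i*} > r_{i'}, and let λ ∈ (0,1). Then there exists δ > 0 such that for every v ∈ Δ(n) with ‖v − e_{i'}‖₂ ≤ δ, the λ-perturbed replicator field satisfies g_λ(v)[i*] > 0. In particular, the vector field points away from the suboptimal pure strategy e_{i'} in the direction of the better model i*. -/
/-- The λ-perturbed replicator field associated with `r`:
`g_λ(v)[i] = r_i((1−λ)v_i + λ/n) − (Σ_j r_j((1−λ)v_j + λ/n)) v_i`. -/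
noncomputable def perturbedField {n : ℕ} (r : Fin n → ℝ) (lam : ℝ)
    (v : Fin n → ℝ) : Fin n → ℝ :=
  fun i => r i * ((1 - lam) * v i + lam / n) -
    (∑ j, r j * ((1 - lam) * v j + lam / n)) * v i

/-- For `n ≥ 2`, `r` with positive entries, `i* ≠ i'` with
`r_{i*} > r_{i'}`, and `λ ∈ (0,1)`, there exists `δ > 0` such that for every
`v` in the probability simplex with `‖v − e_{i'}‖₂ ≤ δ` we have
`g_λ(v)[i*] > 0`. -/
theorem stmt_7 (n : ℕ) (hn : 2 ≤ n) (r : Fin n → ℝ) (hr : ∀ i, 0 < r i)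
    (istar i' : Fin n) (hne : istar ≠ i') (hgt : r i' < r istar)
    (lam : ℝ) (hlam : lam ∈ Set.Ioo (0 : ℝ) 1) :
    ∃ δ > 0, ∀ v ∈ stdSimplex ℝ (Fin n),
      Real.sqrt (∑ j, (v j - (Pi.single i' 1 : Fin n → ℝ) j) ^ 2) ≤ δ →
      0 < perturbedField r lam v istar := by
  obtain ⟨hl0, hl1⟩ := hlam
  have hnpos : (0:ℝ) < n := by
    have : (0:ℕ) < n := by omega
    exact_mod_cast this
  haveI : Nonempty (Fin n) := ⟨istar⟩
  set R := Finset.univ.sup' Finset.univ_nonempty r with hRdef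
  have hRge : ∀ j : Fin n, r j ≤ R := fun j =>
    Finset.le_sup' r (Finset.mem_univ j)
  have hRpos : 0 < R := lt_of_lt_of_le (hr istar) (hRge istar)
  set δ := r istar * lam / (n * (R + 1)) with hδdef
  have hδpos : 0 < δ := by
    have := hr istar
    positivity
  refine ⟨δ, hδpos, ?_⟩
  intro v hv hnorm
  have hv0 : ∀ j, 0 ≤ v j := hv.1
  have hv1 : ∑ j, v j = 1 := hv.2
  -- bound v istar ≤ δ
  have hvi : v istar ≤ δ := by
    have h1 : (v istar) ^ 2 ≤ ∑ j, (v j - (Pi.single i' 1 : Fin n → ℝ) j) ^ 2 := by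
      have h := Finset.single_le_sum
        (f := fun j => (v j - (Pi.single i' 1 : Fin n → ℝ) j) ^ 2)
        (fun j _ => sq_nonneg _) (Finset.mem_univ istar)
      simpa [Pi.single_eq_of_ne hne] using h
    calc v istar ≤ |v istar| := le_abs_self _
      _ = Real.sqrt ((v istar) ^ 2) := (Real.sqrt_sq_eq_abs _).symm
      _ ≤ Real.sqrt (∑ j, (v j - (Pi.single i' 1 : Fin n → ℝ) j) ^ 2) :=
          Real.sqrt_le_sqrt h1
      _ ≤ δ := hnorm
  -- bound the sum S ≤ R
  have hwnn : ∀ j : Fin n, 0 ≤ (1 - lam) * v j + lam / n := fun j => by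
    have := hv0 j
    have : 0 ≤ (1 - lam) * v j := mul_nonneg (by linarith) this
    positivity
  have hwsum : ∑ j, ((1 - lam) * v j + lam / n) = 1 := by
    rw [Finset.sum_add_distrib, ← Finset.mul_sum, hv1, Finset.sum_const,
      Finset.card_univ, Fintype.card_fin, nsmul_eq_mul]
    field_simp; ring
  have hS : ∑ j, r j * ((1 - lam) * v j + lam / n) ≤ R := by
    calc ∑ j, r j * ((1 - lam) * v j + lam / n)
        ≤ ∑ j, R * ((1 - lam) * v j + lam / n) :=
          Finset.sum_le_sum (fun j _ => mul_le_mul_of_nonneg_right (hRge j) (hwnn j))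
      _ = R := by rw [← Finset.mul_sum, hwsum, mul_one]
  have hSv : (∑ j, r j * ((1 - lam) * v j + lam / n)) * v istar ≤ R * δ := by
    calc (∑ j, r j * ((1 - lam) * v j + lam / n)) * v istar
        ≤ R * v istar := mul_le_mul_of_nonneg_right hS (hv0 istar)
      _ ≤ R * δ := mul_le_mul_of_nonneg_left hvi hRpos.le
  have hRδ : R * δ < r istar * (lam / n) := by
    have h1 : R * δ = r istar * lam / n * (R / (R + 1)) := by
      rw [hδdef]; field_simp
    have h2 : R / (R + 1) < 1 := by
      rw [div_lt_one (by linarith)]; linarith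
    have h3 : 0 < r istar * lam / n := by
      have := hr istar; positivity
    calc R * δ = r istar * lam / n * (R / (R + 1)) := h1
      _ < r istar * lam / n * 1 := by exact mul_lt_mul_of_pos_left h2 h3
      _ = r istar * (lam / n) := by ring
  have hext : 0 ≤ r istar * ((1 - lam) * v istar) :=
    mul_nonneg (hr istar).le (mul_nonneg (by linarith) (hv0 istar))
  simp only [perturbedField]
  nlinarith [hSv, hRδ, hext]
end

section
/- Let n ≥ 2, r ∈ ℝ^n, and set M = max_{j} |r_j|. Let i', i ∈ {1,…,n} with i ≠ i', let λ ∈ (0,1), δ > 0, and let v ∈ Δ(n) satisfy ‖v − e_{i'}‖₂ ≤ δ. Then the λ-perturbed replicator field admits the expansion |g_λ(v)[i] − ((r_i − r_{i'} v_{i'}) v_i + λ r_i / n)| ≤ M (3λδ + √n · δ²); i.e., near the pure strategy e_{i'}, g_λ(v)[i] equals (r_i − r_{i'} v_{i'}) v_i + λ r_i / n up to terms of order λδ and δ². -/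
/-- With `M = max_j |r_j|`, `i ≠ i'`, `λ ∈ (0,1)`, `δ > 0`, and
`v` in the simplex with `‖v − e_{i'}‖₂ ≤ δ`, the λ-perturbed replicator field
admits the expansion
`|g_λ(v)[i] − ((r_i − r_{i'} v_{i'}) v_i + λ r_i / n)| ≤ M (3λδ + √n δ²)`. -/
theorem stmt_8 (n : ℕ) (hn : 2 ≤ n) (r : Fin n → ℝ) (M : ℝ)
    (hM : IsGreatest (Set.range fun j => |r j|) M)
    (i' i : Fin n) (hne : i ≠ i') (lam : ℝ) (hlam : lam ∈ Set.Ioo (0 : ℝ) 1)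
    (δ : ℝ) (hδ : 0 < δ) (v : Fin n → ℝ) (hv : v ∈ stdSimplex ℝ (Fin n))
    (hclose : Real.sqrt (∑ j, (v j - (Pi.single i' 1 : Fin n → ℝ) j) ^ 2) ≤ δ) :
    |perturbedField r lam v i - ((r i - r i' * v i') * v i + lam * r i / n)| ≤
      M * (3 * lam * δ + Real.sqrt n * δ ^ 2) := by
  obtain ⟨hvnn, hvsum⟩ := hv
  obtain ⟨⟨j₀, hj₀⟩, hMub⟩ := hM
  have hr : ∀ j, |r j| ≤ M := fun j => hMub ⟨j, rfl⟩
  have hMnn : 0 ≤ M := hj₀ ▸ abs_nonneg _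
  have hnpos : (0 : ℝ) < n := by positivity
  -- componentwise distance bounds
  have hsumsq : ∑ j, (v j - (Pi.single i' 1 : Fin n → ℝ) j) ^ 2 ≤ δ ^ 2 := by
    have h1 : 0 ≤ ∑ j, (v j - (Pi.single i' 1 : Fin n → ℝ) j) ^ 2 :=
      Finset.sum_nonneg fun j _ => sq_nonneg _
    nlinarith [Real.sq_sqrt h1, Real.sqrt_nonneg
      (∑ j, (v j - (Pi.single i' 1 : Fin n → ℝ) j) ^ 2)]
  have hcomp : ∀ j, |v j - (Pi.single i' 1 : Fin n → ℝ) j| ≤ δ := by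
    intro j
    have h1 : (v j - (Pi.single i' 1 : Fin n → ℝ) j) ^ 2 ≤ δ ^ 2 := by
      refine le_trans ?_ hsumsq
      exact Finset.single_le_sum (f := fun k => (v k - (Pi.single i' 1 : Fin n → ℝ) k) ^ 2)
        (fun k _ => sq_nonneg _) (Finset.mem_univ j)
    nlinarith [abs_nonneg (v j - (Pi.single i' 1 : Fin n → ℝ) j),
      sq_abs (v j - (Pi.single i' 1 : Fin n → ℝ) j)]
  have hvi : |v i| ≤ δ := by
    have := hcomp i
    rwa [Pi.single_eq_of_ne hne, sub_zero] at this
  have hvi' : 1 - v i' ≤ δ := by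
    have := hcomp i'
    rw [Pi.single_eq_same] at this
    linarith [abs_le.mp this]
  set T := ∑ j, r j * v j with hT
  set R := ∑ j, r j with hR
  have hsplit : ∑ j, r j * ((1 - lam) * v j + lam / n) = (1 - lam) * T + lam / n * R := by
    rw [hT, hR, Finset.mul_sum, Finset.mul_sum, ← Finset.sum_add_distrib]
    exact Finset.sum_congr rfl fun j _ => by ring
  have key : perturbedField r lam v i - ((r i - r i' * v i') * v i + lam * r i / n)
      = v i * (lam * (T - r i - R / n) + (r i' * v i' - T)) := by
    simp only [perturbedField]
    rw [hsplit]; ring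
  -- bounds on T and R
  have hTb : |T| ≤ M := by
    calc |T| ≤ ∑ j, |r j * v j| := Finset.abs_sum_le_sum_abs _ _
      _ ≤ ∑ j, M * v j := Finset.sum_le_sum fun j _ => by
          rw [abs_mul, abs_of_nonneg (hvnn j)]
          exact mul_le_mul_of_nonneg_right (hr j) (hvnn j)
      _ = M := by rw [← Finset.mul_sum, hvsum, mul_one]
  have hRb : |R| ≤ n * M := by
    calc |R| ≤ ∑ j, |r j| := Finset.abs_sum_le_sum_abs _ _
      _ ≤ ∑ _j : Fin n, M := Finset.sum_le_sum fun j _ => hr j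
      _ = n * M := by simp [Finset.sum_const, mul_comm]
  have hRn : |R / n| ≤ M := by
    rw [abs_div, abs_of_pos hnpos, div_le_iff₀ hnpos]
    calc |R| ≤ n * M := hRb
      _ = M * n := mul_comm _ _
  -- bound on tail sum
  have htail : |r i' * v i' - T| ≤ M * δ := by
    have herase : T - r i' * v i' = ∑ j ∈ Finset.univ.erase i', r j * v j := by
      rw [Finset.sum_erase_eq_sub (Finset.mem_univ i'), hT]
    have hvtail : ∑ j ∈ Finset.univ.erase i', v j = 1 - v i' := by
      rw [Finset.sum_erase_eq_sub (Finset.mem_univ i'), hvsum]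
    rw [abs_sub_comm, herase]
    calc |∑ j ∈ Finset.univ.erase i', r j * v j|
        ≤ ∑ j ∈ Finset.univ.erase i', |r j * v j| := Finset.abs_sum_le_sum_abs _ _
      _ ≤ ∑ j ∈ Finset.univ.erase i', M * v j := Finset.sum_le_sum fun j _ => by
          rw [abs_mul, abs_of_nonneg (hvnn j)]
          exact mul_le_mul_of_nonneg_right (hr j) (hvnn j)
      _ = M * (1 - v i') := by rw [← Finset.mul_sum, hvtail]
      _ ≤ M * δ := mul_le_mul_of_nonneg_left hvi' hMnn
  obtain ⟨hl0, hl1⟩ := hlam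
  have hmain : |perturbedField r lam v i - ((r i - r i' * v i') * v i + lam * r i / n)|
      ≤ δ * (lam * (3 * M) + M * δ) := by
    rw [key, abs_mul]
    have h1 : |lam * (T - r i - R / n) + (r i' * v i' - T)| ≤ lam * (3 * M) + M * δ := by
      refine (abs_add_le _ _).trans (add_le_add ?_ htail)
      rw [abs_mul, abs_of_pos hl0]
      refine mul_le_mul_of_nonneg_left ?_ hl0.le
      calc |T - r i - R / n| ≤ |T| + |r i| + |R / n| := by
            refine (abs_sub _ _).trans ?_
            exact add_le_add (abs_sub _ _) le_rfl
        _ ≤ M + M + M := add_le_add (add_le_add hTb (hr i)) hRn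
        _ = 3 * M := by ring
    exact mul_le_mul hvi h1 (abs_nonneg _) hδ.le
  have hsqrtn : 1 ≤ Real.sqrt n := by
    rw [show (1:ℝ) = Real.sqrt 1 by simp]
    exact Real.sqrt_le_sqrt (by exact_mod_cast hn.trans' (by norm_num))
  refine hmain.trans ?_
  nlinarith [sq_nonneg δ, mul_le_mul_of_nonneg_left hsqrtn (mul_nonneg hMnn (sq_nonneg δ))]
end

section
/- In the joint setting, suppose the differentiable curves v_{pα} : ℝ → ℝ^m (for each p ∈ P, α ∈ A(p)) and w : ℝ → ℝ^P satisfy the unperturbed replicator ODEs: for every t, v̇_{pα}(t) = V(v_{pα}(t)) r_{pα} and ẇ(t) = W(w(t)) R̄(v(t)), where V and W denote the replicator matrices in dimensions m and |P| respectively. Then for every t, the derivative of t ↦ ⟨w(t), R̄(v(t))⟩ equals Σ_{p∈P} w_p(t) Σ_{α∈A(p)} ⟨r_{pα}, V(v_{pα}(t)) r_{pα}⟩ + ⟨R̄(v(t)), W(w(t)) R̄(v(t))⟩. -/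
open Matrix

/-- The replicator matrix associated with a vector `x`: entries
`x_j (1 - x_j)` on the diagonal and `-x_j x_i` off the diagonal. -/
def replicatorMatrix {ι : Type} [Fintype ι] [DecidableEq ι] (x : ι → ℝ) :
    Matrix ι ι ℝ :=
  fun j i => if j = i then x j * (1 - x j) else -(x j * x i)

/-- The aggregate performance vector: `R̄(v)_p = Σ_{α ∈ A(p)} ⟨v_{pα}, r_{pα}⟩`. -/
def aggPerf {P : Type} [Fintype P] {A : P → Type} [∀ p, Fintype (A p)] {m : ℕ}
    (r : (p : P) → A p → Fin m → ℝ) (v : (p : P) → A p → Fin m → ℝ) : P → ℝ :=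
  fun p => ∑ α, ∑ i, v p α i * r p α i

/-- If the curves `v_{pα}` and `w` satisfy the unperturbed
replicator ODEs `v̇_{pα} = V(v_{pα}) r_{pα}` and `ẇ = W(w) R̄(v)`, then the
derivative of `t ↦ ⟨w(t), R̄(v(t))⟩` equals
`Σ_p w_p(t) Σ_α ⟨r_{pα}, V(v_{pα}(t)) r_{pα}⟩ + ⟨R̄(v(t)), W(w(t)) R̄(v(t))⟩`. -/
theorem stmt_13 (P : Type) [Fintype P] [Nonempty P] [DecidableEq P]
    (A : P → Type) [∀ p, Fintype (A p)] [∀ p, Nonempty (A p)]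
    (m : ℕ) (hm : 1 ≤ m)
    (r : (p : P) → A p → Fin m → ℝ)
    (v : ℝ → (p : P) → A p → Fin m → ℝ) (w : ℝ → P → ℝ)
    (hv : ∀ t, ∀ p, ∀ α : A p,
      HasDerivAt (fun s => v s p α) (replicatorMatrix (v t p α) *ᵥ r p α) t)
    (hw : ∀ t, HasDerivAt w (replicatorMatrix (w t) *ᵥ aggPerf r (v t)) t)
    (t : ℝ) :
    HasDerivAt (fun s => ∑ p, w s p * aggPerf r (v s) p)
      ((∑ p, w t p * ∑ α : A p,
          ∑ i, r p α i * (replicatorMatrix (v t p α) *ᵥ r p α) i) +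
        ∑ p, aggPerf r (v t) p *
          (replicatorMatrix (w t) *ᵥ aggPerf r (v t)) p) t := by
  have hvc : ∀ p (α : A p) (i : Fin m),
      HasDerivAt (fun s => v s p α i) ((replicatorMatrix (v t p α) *ᵥ r p α) i) t := by
    intro p α i
    exact (hasDerivAt_pi.mp (hv t p α)) i
  have hwc : ∀ p : P,
      HasDerivAt (fun s => w s p) ((replicatorMatrix (w t) *ᵥ aggPerf r (v t)) p) t :=
    fun p => (hasDerivAt_pi.mp (hw t)) p
  have hagg : ∀ p : P,
      HasDerivAt (fun s => aggPerf r (v s) p)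
        (∑ α : A p, ∑ i, (replicatorMatrix (v t p α) *ᵥ r p α) i * r p α i) t := by
    intro p
    unfold aggPerf
    exact HasDerivAt.fun_sum fun α _ =>
      HasDerivAt.fun_sum fun i _ => (hvc p α i).mul_const (r p α i)
  have key : HasDerivAt (fun s => ∑ p, w s p * aggPerf r (v s) p)
      (∑ p, ((replicatorMatrix (w t) *ᵥ aggPerf r (v t)) p * aggPerf r (v t) p +
        w t p * ∑ α : A p, ∑ i, (replicatorMatrix (v t p α) *ᵥ r p α) i * r p α i)) t :=
    HasDerivAt.fun_sum fun p _ => (hwc p).mul (hagg p)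
  convert key using 1
  have h1 : ∀ (p : P) (α : A p), ∑ i, r p α i * (replicatorMatrix (v t p α) *ᵥ r p α) i
      = ∑ i, (replicatorMatrix (v t p α) *ᵥ r p α) i * r p α i :=
    fun p α => Finset.sum_congr rfl fun i _ => mul_comm _ _
  simp only [h1]
  rw [Finset.sum_add_distrib, add_comm]
  congr 1
  exact Finset.sum_congr rfl fun p _ => mul_comm _ _
end

section
/- In the joint setting with m ≥ 2, suppose each r_{pα} has pairwise distinct entries, let v = (v_{pα}) be a collection of vectors in Δ(m) with all entries v_{pα}[i] ∈ (0,1), and let w ∈ Δ(|P|). Then the dissipation sum is strictly positive: Σ_{p∈P} w_p Σ_{α∈A(p)} ⟨r_{pα}, V(v_{pα}) r_{pα}⟩ + ⟨R̄(v), W(w) R̄(v)⟩ > 0, where V and W denote the replicator matrices in dimensions m and |P| respectively. -/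
open Matrix

lemma mulVec_replicator {ι : Type} [Fintype ι] [DecidableEq ι] (v x : ι → ℝ) (j : ι) :
    (replicatorMatrix v *ᵥ x) j = v j * x j - v j * ∑ i, v i * x i := by
  simp only [replicatorMatrix, Matrix.mulVec, dotProduct]
  have h : ∀ i ∈ Finset.univ, (if j = i then v j * (1 - v j) else -(v j * v i)) * x i
      = (if j = i then v j * x i else 0) - v j * (v i * x i) := by
    intro i _
    split <;> rename_i hji
    · subst hji; ring
    · ring
  rw [Finset.sum_congr rfl h, Finset.sum_sub_distrib, Finset.sum_ite_eq, ← Finset.mul_sum]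
  simp

lemma quad_eq_variance {ι : Type} [Fintype ι] [DecidableEq ι] (v x : ι → ℝ)
    (hs : ∑ i, v i = 1) :
    ∑ j, x j * (replicatorMatrix v *ᵥ x) j
      = ∑ j, v j * (x j - ∑ i, v i * x i) ^ 2 := by
  simp only [mulVec_replicator]
  set μ := ∑ i, v i * x i with hμ
  have h1 : ∀ j ∈ Finset.univ, x j * (v j * x j - v j * μ)
      = v j * x j ^ 2 - (v j * x j) * μ := by intro j _; ring
  have h2 : ∀ j ∈ Finset.univ, v j * (x j - μ) ^ 2
      = v j * x j ^ 2 - 2 * μ * (v j * x j) + μ ^ 2 * v j := by intro j _; ring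
  rw [Finset.sum_congr rfl h1, Finset.sum_congr rfl h2, Finset.sum_sub_distrib,
    Finset.sum_add_distrib, Finset.sum_sub_distrib, ← Finset.sum_mul, ← Finset.mul_sum,
    ← Finset.mul_sum, hs, ← hμ]
  ring

lemma quad_nonneg {ι : Type} [Fintype ι] [DecidableEq ι] (v x : ι → ℝ)
    (hnn : ∀ i, 0 ≤ v i) (hs : ∑ i, v i = 1) :
    0 ≤ ∑ j, x j * (replicatorMatrix v *ᵥ x) j := by
  rw [quad_eq_variance v x hs]
  exact Finset.sum_nonneg fun j _ => mul_nonneg (hnn j) (sq_nonneg _)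

lemma quad_pos {ι : Type} [Fintype ι] [DecidableEq ι] (v x : ι → ℝ)
    (hpos : ∀ i, 0 < v i) (hs : ∑ i, v i = 1)
    (hx : ∃ i j, x i ≠ x j) :
    0 < ∑ j, x j * (replicatorMatrix v *ᵥ x) j := by
  rw [quad_eq_variance v x hs]
  obtain ⟨i, j, hij⟩ := hx
  set μ := ∑ i, v i * x i
  have hkey : ∃ k, x k ≠ μ := by
    by_contra hc
    push_neg at hc
    exact hij ((hc i).trans (hc j).symm)
  obtain ⟨k, hk⟩ := hkey
  refine Finset.sum_pos' (fun j _ => mul_nonneg (hpos j).le (sq_nonneg _))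
    ⟨k, Finset.mem_univ k, mul_pos (hpos k) ?_⟩
  exact sq_pos_of_ne_zero (sub_ne_zero.mpr hk)

/-- In the joint setting with `m ≥ 2`, each `r_{pα}` having
pairwise distinct entries, `v_{pα}` simplex vectors with all entries in
`(0,1)`, and `w ∈ Δ(|P|)`, the dissipation sum is strictly positive:
`Σ_p w_p Σ_α ⟨r_{pα}, V(v_{pα}) r_{pα}⟩ + ⟨R̄(v), W(w) R̄(v)⟩ > 0`. -/
theorem stmt_14 (P : Type) [Fintype P] [Nonempty P] [DecidableEq P]
    (A : P → Type) [∀ p, Fintype (A p)] [∀ p, Nonempty (A p)]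
    (m : ℕ) (hm : 2 ≤ m)
    (r : (p : P) → A p → Fin m → ℝ)
    (hdist : ∀ p, ∀ α : A p, ∀ i j, i ≠ j → r p α i ≠ r p α j)
    (v : (p : P) → A p → Fin m → ℝ)
    (hv : ∀ p, ∀ α : A p, v p α ∈ stdSimplex ℝ (Fin m))
    (hv01 : ∀ p, ∀ α : A p, ∀ i, v p α i ∈ Set.Ioo (0 : ℝ) 1)
    (w : P → ℝ) (hw : w ∈ stdSimplex ℝ P) :
    0 < (∑ p, w p * ∑ α : A p,
          ∑ i, r p α i * (replicatorMatrix (v p α) *ᵥ r p α) i) +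
        ∑ p, aggPerf r v p * (replicatorMatrix w *ᵥ aggPerf r v) p := by
  have hQ : ∀ p, ∀ α : A p, 0 < ∑ i, r p α i * (replicatorMatrix (v p α) *ᵥ r p α) i := by
    intro p α
    refine quad_pos _ _ (fun i => (hv01 p α i).1) (hv p α).2 ?_
    have h01 : (⟨0, by omega⟩ : Fin m) ≠ ⟨1, by omega⟩ := by
      simp [Fin.ext_iff]
    exact ⟨_, _, hdist p α _ _ h01⟩
  have hQp : ∀ p, 0 < ∑ α : A p, ∑ i, r p α i * (replicatorMatrix (v p α) *ᵥ r p α) i :=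
    fun p => Finset.sum_pos (fun α _ => hQ p α) Finset.univ_nonempty
  have hS1 : 0 < ∑ p, w p * ∑ α : A p,
      ∑ i, r p α i * (replicatorMatrix (v p α) *ᵥ r p α) i := by
    have hex : ∃ p, 0 < w p := by
      by_contra hc
      push_neg at hc
      have : ∑ p, w p = 0 := le_antisymm (Finset.sum_nonpos fun p _ => hc p)
        (Finset.sum_nonneg fun p _ => hw.1 p)
      rw [hw.2] at this; norm_num at this
    obtain ⟨p0, hp0⟩ := hex
    exact Finset.sum_pos' (fun p _ => mul_nonneg (hw.1 p) (hQp p).le)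
      ⟨p0, Finset.mem_univ p0, mul_pos hp0 (hQp p0)⟩
  have hS2 : 0 ≤ ∑ p, aggPerf r v p * (replicatorMatrix w *ᵥ aggPerf r v) p :=
    quad_nonneg w (aggPerf r v) hw.1 hw.2
  linarith
end

section
/- In the joint setting with m ≥ 2, suppose each r_{pα} has pairwise distinct entries, and suppose the differentiable curves v_{pα} : I → ℝ^m and w : I → ℝ^P on an open interval I ⊆ ℝ satisfy, for every t ∈ I: v̇_{pα}(t) = V(v_{pα}(t)) r_{pα} and ẇ(t) = W(w(t)) R̄(v(t)); moreover w(t) ∈ Δ(|P|) and each v_{pα}(t) ∈ Δ(m) with all entries in (0,1). Then the map t ↦ ⟨w(t), R̄(v(t))⟩ is strictly increasing on I; equivalently, the Lyapunov function t ↦ C − ⟨w(t), R̄(v(t))⟩ is strictly decreasing on I for any constant C. -/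
open Matrix

lemma repl_apply {ι : Type} [Fintype ι] [DecidableEq ι] (x r : ι → ℝ) (j : ι) :
    (replicatorMatrix x *ᵥ r) j = x j * (r j - ∑ i, x i * r i) := by
  have h : ∀ i : ι, (if j = i then x j * (1 - x j) else -(x j * x i)) * r i
      = (if j = i then x j * r i else 0) - x j * (x i * r i) := by
    intro i
    split
    · next h => subst h; ring
    · ring
  simp only [replicatorMatrix, mulVec, dotProduct]
  rw [Finset.sum_congr rfl fun i _ => h i, Finset.sum_sub_distrib,
    Finset.sum_ite_eq, ← Finset.mul_sum]
  simp [mul_sub]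

lemma quad_eq {ι : Type} [Fintype ι] [DecidableEq ι] (x r : ι → ℝ)
    (hx : ∑ i, x i = 1) :
    ∑ j, (replicatorMatrix x *ᵥ r) j * r j
      = ∑ j, x j * (r j - ∑ i, x i * r i) ^ 2 := by
  set μ := ∑ i, x i * r i with hμ
  have h : ∀ j : ι, x j * (r j - μ) ^ 2
      = (replicatorMatrix x *ᵥ r) j * r j + (μ ^ 2 * x j - μ * (x j * r j)) := by
    intro j; rw [repl_apply, ← hμ]; ring
  rw [Finset.sum_congr rfl fun j _ => h j, Finset.sum_add_distrib,
    Finset.sum_sub_distrib, ← Finset.mul_sum, ← Finset.mul_sum, hx, ← hμ]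
  ring

/-- In the joint setting with `m ≥ 2` and each `r_{pα}` having
pairwise distinct entries, if the curves `v_{pα}` and `w` satisfy the
unperturbed replicator ODEs on an open interval `I`, staying in the respective
simplices with all entries of `v_{pα}(t)` in `(0,1)`, then
`t ↦ ⟨w(t), R̄(v(t))⟩` is strictly increasing on `I`; equivalently,
`t ↦ C − ⟨w(t), R̄(v(t))⟩` is strictly decreasing on `I` for any constant `C`. -/
theorem stmt_15 (P : Type) [Fintype P] [Nonempty P] [DecidableEq P]
    (A : P → Type) [∀ p, Fintype (A p)] [∀ p, Nonempty (A p)]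
    (m : ℕ) (hm : 2 ≤ m)
    (r : (p : P) → A p → Fin m → ℝ)
    (hdist : ∀ p, ∀ α : A p, ∀ i j, i ≠ j → r p α i ≠ r p α j)
    (I : Set ℝ) (hIopen : IsOpen I) (hIconn : I.OrdConnected)
    (v : ℝ → (p : P) → A p → Fin m → ℝ) (w : ℝ → P → ℝ)
    (hv : ∀ t ∈ I, ∀ p, ∀ α : A p,
      HasDerivAt (fun s => v s p α) (replicatorMatrix (v t p α) *ᵥ r p α) t)
    (hw : ∀ t ∈ I, HasDerivAt w (replicatorMatrix (w t) *ᵥ aggPerf r (v t)) t)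
    (hwS : ∀ t ∈ I, w t ∈ stdSimplex ℝ P)
    (hvS : ∀ t ∈ I, ∀ p, ∀ α : A p, v t p α ∈ stdSimplex ℝ (Fin m))
    (hv01 : ∀ t ∈ I, ∀ p, ∀ α : A p, ∀ i, v t p α i ∈ Set.Ioo (0 : ℝ) 1) :
    StrictMonoOn (fun t => ∑ p, w t p * aggPerf r (v t) p) I ∧
    ∀ C : ℝ, StrictAntiOn (fun t => C - ∑ p, w t p * aggPerf r (v t) p) I := by
  set f : ℝ → ℝ := fun t => ∑ p, w t p * aggPerf r (v t) p with hf_def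
  set D : ℝ → ℝ := fun t => ∑ p,
      ((replicatorMatrix (w t) *ᵥ aggPerf r (v t)) p * aggPerf r (v t) p
        + w t p * ∑ α, ∑ i, (replicatorMatrix (v t p α) *ᵥ r p α) i * r p α i)
    with hD_def
  -- derivative of f
  have hf : ∀ t ∈ I, HasDerivAt f (D t) t := by
    intro t ht
    apply HasDerivAt.fun_sum
    intro p _
    have hwp : HasDerivAt (fun s => w s p)
        ((replicatorMatrix (w t) *ᵥ aggPerf r (v t)) p) t :=
      hasDerivAt_pi.mp (hw t ht) p
    have hgp : HasDerivAt (fun s => aggPerf r (v s) p)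
        (∑ α, ∑ i, (replicatorMatrix (v t p α) *ᵥ r p α) i * r p α i) t := by
      apply HasDerivAt.fun_sum
      intro α _
      apply HasDerivAt.fun_sum
      intro i _
      exact (hasDerivAt_pi.mp (hv t ht p α) i).mul_const (r p α i)
    exact hwp.mul hgp
  -- positivity of the derivative
  have hDpos : ∀ t ∈ I, 0 < D t := by
    intro t ht
    rw [hD_def]
    simp only
    rw [Finset.sum_add_distrib]
    have h1 : 0 ≤ ∑ p, (replicatorMatrix (w t) *ᵥ aggPerf r (v t)) p
        * aggPerf r (v t) p := by
      rw [quad_eq _ _ (hwS t ht).2]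
      exact Finset.sum_nonneg fun p _ =>
        mul_nonneg ((hwS t ht).1 p) (sq_nonneg _)
    have h2 : 0 < ∑ p, w t p *
        ∑ α, ∑ i, (replicatorMatrix (v t p α) *ᵥ r p α) i * r p α i := by
      have hQ : ∀ p, 0 < ∑ α, ∑ i,
          (replicatorMatrix (v t p α) *ᵥ r p α) i * r p α i := by
        intro p
        apply Finset.sum_pos
        · intro α _
          rw [quad_eq _ _ (hvS t ht p α).2]
          set μ := ∑ i, v t p α i * r p α i
          have hex : ∃ i, r p α i ≠ μ := by
            by_contra h
            push_neg at h
            exact hdist p α ⟨0, by omega⟩ ⟨1, by omega⟩ (by simp)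
              ((h _).trans (h _).symm)
          obtain ⟨i, hi⟩ := hex
          apply Finset.sum_pos'
          · intro j _
            exact mul_nonneg (hv01 t ht p α j).1.le (sq_nonneg _)
          · exact ⟨i, Finset.mem_univ i,
              mul_pos (hv01 t ht p α i).1 (sq_pos_of_ne_zero (sub_ne_zero.mpr hi))⟩
        · exact Finset.univ_nonempty
      have hex : ∃ p, w t p ≠ 0 := by
        by_contra h
        push_neg at h
        have := (hwS t ht).2
        simp [h] at this
      obtain ⟨p0, hp0⟩ := hex
      apply Finset.sum_pos'
      · intro p _
        exact mul_nonneg ((hwS t ht).1 p) (hQ p).le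
      · exact ⟨p0, Finset.mem_univ p0,
          mul_pos (lt_of_le_of_ne ((hwS t ht).1 p0) (Ne.symm hp0)) (hQ p0)⟩
    linarith
  have hmono : StrictMonoOn f I := by
    apply strictMonoOn_of_deriv_pos (convex_iff_ordConnected.mpr hIconn)
    · exact fun t ht => (hf t ht).differentiableAt.continuousAt.continuousWithinAt
    · intro t ht
      rw [hIopen.interior_eq] at ht
      rw [(hf t ht).deriv]
      exact hDpos t ht
  refine ⟨hmono, fun C a ha b hb hab => ?_⟩
  exact sub_lt_sub_left (hmono ha hb hab) C
end
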